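/- Let C > 0, ρ ∈ (0,1), let φ : I×I → ℝ be continuous, and let ε > 0. Then there exists m₀ ≥ 1, depending only on ε, C, ρ and φ, such that for EVERY skew product P on I×I over a Borel map f : I → I with (C,ρ)-contracting fibers, every f-invariant Borel probability measure μ̄ on I for which the functions (φ∘P^m)⁺ are Borel measurable, and all integers m₂ ≥ m₁ ≥ m₀, one has | ∫ (φ∘P^{m₂})⁺ dμ̄ − ∫ (φ∘P^{m₁})⁺ dμ̄ | ≤ ε. -/

import Mathlib

/-!
Since the skew product preserves fibers, `P^{m+k}(x, y) = P^m(f^k x, y')` where `y'` is the fiber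
coordinate of `P^k(x, y)`. So `(φ∘P^{m+k})⁺(x)` is a supremum of `φ∘P^m` over part of the fiber
over `f^k x`, and differs from `(φ∘P^m)⁺(f^k x)` by at most the oscillation of `φ∘P^m` on that
fiber. Contraction of fibers and uniform continuity of `φ` make this oscillation `≤ ε` as soon as
`C ρ^m` is small, with no dependence on `P`; integrating and using the `f`-invariance of `μ̄`
gives the bound.
-/

open MeasureTheory Set Filter Topology

noncomputable section

/-- The interval `I = [-1/2, 1/2] ⊆ ℝ`. -/
abbrev Iv : Set ℝ := Set.Icc (-(1 / 2)) (1 / 2)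

instance : Nonempty Iv := ⟨⟨0, by norm_num⟩⟩

/-- The square `Σ = I × I`. -/
abbrev Sq : Type := Iv × Iv

open Function

section FiberSup

variable {α β : Type*}

/-- The paper's `(φ ∘ P^m)⁺` is `fiberSup (φ ∘ P^[m])`. -/
def fiberSup (ψ : α × β → ℝ) (x : α) : ℝ := ⨆ y, ψ (x, y)

lemma abs_fiberSup_le [Nonempty β] {ψ : α × β → ℝ} {M : ℝ} (hψ : ∀ p, |ψ p| ≤ M) (x : α) :
    |fiberSup ψ x| ≤ M := by
  have hbdd : BddAbove (range fun y => ψ (x, y)) :=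
    ⟨M, forall_mem_range.2 fun y => (abs_le.1 (hψ _)).2⟩
  obtain ⟨y⟩ := ‹Nonempty β›
  exact abs_le.2 ⟨(abs_le.1 (hψ _)).1.trans (le_ciSup hbdd y),
    ciSup_le fun y => (abs_le.1 (hψ _)).2⟩

lemma abs_ciSup_comp_sub_ciSup_le [Nonempty β] {u : β → ℝ} {ε : ℝ} (hu : BddAbove (range u))
    (hosc : ∀ y y', u y ≤ u y' + ε) (h : β → β) :
    |(⨆ y, u (h y)) - ⨆ y, u y| ≤ ε := by
  obtain ⟨y₀⟩ := ‹Nonempty β›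
  have hcomp_le : ⨆ y, u (h y) ≤ ⨆ y, u y := ciSup_le fun y => le_ciSup hu (h y)
  have hpoint_le : u (h y₀) ≤ ⨆ y, u (h y) := le_ciSup (hu.mono (range_comp_subset_range h u)) y₀
  have hle_comp : ⨆ y, u y ≤ (⨆ y, u (h y)) + ε :=
    ciSup_le fun y => by linarith [hosc y (h y₀)]
  exact abs_le.2 ⟨by linarith, by linarith⟩

end FiberSup

section SkewProduct

variable {α β : Type*} {f : α → α} {P : α × β → α × β}

lemma iterate_add_apply_of_semiconj_fst (hP : Semiconj Prod.fst P f) (m k : ℕ) (x : α) (y : β) :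
    P^[m + k] (x, y) = P^[m] (f^[k] x, (P^[k] (x, y)).2) := by
  rw [iterate_add_apply, ← hP.iterate_right k (x, y)]

lemma abs_fiberSup_iterate_add_sub_le (hP : Semiconj Prod.fst P f) [Nonempty β] {φ : α × β → ℝ}
    {M ε : ℝ} (hM : ∀ p, |φ p| ≤ M) {m : ℕ}
    (hosc : ∀ x y y', φ (P^[m] (x, y)) ≤ φ (P^[m] (x, y')) + ε) (k : ℕ) (x : α) :
    |fiberSup (φ ∘ P^[m + k]) x - fiberSup (φ ∘ P^[m]) (f^[k] x)| ≤ ε := by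
  simp only [fiberSup, comp_apply, iterate_add_apply_of_semiconj_fst hP]
  exact abs_ciSup_comp_sub_ciSup_le ⟨M, forall_mem_range.2 fun y => (abs_le.1 (hM _)).2⟩
    (hosc _) fun y => (P^[k] (x, y)).2

end SkewProduct

section ContractingFibers

variable {α β : Type*} [PseudoMetricSpace α] [PseudoMetricSpace β]

def ContractingFibers (C ρ : ℝ) (P : α × β → α × β) : Prop :=
  ∀ (x : α) (y₁ y₂ : β) (m : ℕ), 1 ≤ m → dist (P^[m] (x, y₁)) (P^[m] (x, y₂)) ≤ C * ρ ^ m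

lemma exists_oscillation_le_of_contractingFibers {C ρ ε : ℝ} (hρ₀ : 0 ≤ ρ) (hρ₁ : ρ < 1)
    {φ : α × β → ℝ} (hφ : UniformContinuous φ) (hε : 0 < ε) :
    ∃ m₀ : ℕ, 1 ≤ m₀ ∧ ∀ P : α × β → α × β, ContractingFibers C ρ P →
      ∀ m, m₀ ≤ m → ∀ x y y', φ (P^[m] (x, y)) ≤ φ (P^[m] (x, y')) + ε := by
  obtain ⟨δ, hδ, hφδ⟩ := Metric.uniformContinuous_iff.1 hφ ε hε
  have hlim : Tendsto (fun n : ℕ => C * ρ ^ n) atTop (𝓝 0) := by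
    simpa using (tendsto_pow_atTop_nhds_zero_of_lt_one hρ₀ hρ₁).const_mul C
  obtain ⟨N, hN⟩ := eventually_atTop.1 (hlim.eventually (gt_mem_nhds hδ))
  refine ⟨max N 1, le_max_right _ _, fun P hP m hm x y y' => ?_⟩
  have hclose := hφδ ((hP x y y' m (le_of_max_le_right hm)).trans_lt (hN m (le_of_max_le_left hm)))
  rw [Real.dist_eq, abs_lt] at hclose
  linarith

end ContractingFibers

lemma MeasureTheory.MeasurePreserving.integral_comp_of_aestronglyMeasurable {α β G : Type*}
    [MeasurableSpace α] [MeasurableSpace β] [NormedAddCommGroup G] [NormedSpace ℝ G]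
    {μ : Measure α} {ν : Measure β} {f : α → β} (hf : MeasurePreserving f μ ν) {g : β → G}
    (hg : AEStronglyMeasurable g ν) :
    ∫ x, g (f x) ∂μ = ∫ y, g y ∂ν := by
  rw [← hf.map_eq] at hg ⊢
  exact (integral_map hf.measurable.aemeasurable hg).symm

lemma abs_integral_fiberSup_iterate_add_sub_le {α β : Type*} [Nonempty β] [MeasurableSpace α]
    {μ : Measure α} [IsProbabilityMeasure μ] {f : α → α} {P : α × β → α × β}
    (hf : MeasurePreserving f μ μ) (hP : Semiconj Prod.fst P f) {φ : α × β → ℝ} {M ε : ℝ}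
    (hM : ∀ p, |φ p| ≤ M) (hmeas : ∀ n, Measurable (fiberSup (φ ∘ P^[n]))) {m : ℕ}
    (hosc : ∀ x y y', φ (P^[m] (x, y)) ≤ φ (P^[m] (x, y')) + ε) (k : ℕ) :
    |∫ x, fiberSup (φ ∘ P^[m + k]) x ∂μ - ∫ x, fiberSup (φ ∘ P^[m]) x ∂μ| ≤ ε := by
  have hint : ∀ n, Integrable (fiberSup (φ ∘ P^[n])) μ := fun n =>
    .of_bound (hmeas n).aestronglyMeasurable M
      (ae_of_all _ fun x => abs_fiberSup_le (fun p => hM _) x)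
  have hint_shift : Integrable (fun x => fiberSup (φ ∘ P^[m]) (f^[k] x)) μ :=
    ((hf.iterate k).integrable_comp (hmeas m).aestronglyMeasurable).2 (hint m)
  have hshift : ∫ x, fiberSup (φ ∘ P^[m]) (f^[k] x) ∂μ = ∫ x, fiberSup (φ ∘ P^[m]) x ∂μ :=
    (hf.iterate k).integral_comp_of_aestronglyMeasurable (hmeas m).aestronglyMeasurable
  rw [← hshift, ← integral_sub (hint _) hint_shift]
  simpa using norm_integral_le_of_norm_le_const (μ := μ)
    (f := fun x => fiberSup (φ ∘ P^[m + k]) x - fiberSup (φ ∘ P^[m]) (f^[k] x))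
    (ae_of_all μ (abs_fiberSup_iterate_add_sub_le hP hM hosc k))

theorem uniform_cauchy_sup_integrals_general
    (C ρ : ℝ) (hρ₀ : 0 < ρ) (hρ₁ : ρ < 1)
    (φ : Sq → ℝ) (hφ : Continuous φ) (ε : ℝ) (hε : 0 < ε) :
    ∃ m₀ : ℕ, 1 ≤ m₀ ∧
      ∀ (f : Iv → Iv) (g : Sq → Iv) (P : Sq → Sq),
        Measurable f → Measurable g → Measurable P →
        (∀ p : Sq, P p = (f p.1, g p)) →
        (∀ (x y₁ y₂ : Iv) (m : ℕ), 1 ≤ m →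
          dist (P^[m] (x, y₁)) (P^[m] (x, y₂)) ≤ C * ρ ^ m) →
        ∀ μ : Measure Iv, IsProbabilityMeasure μ → Measure.map f μ = μ →
          (∀ m : ℕ, Measurable fun x : Iv => ⨆ y : Iv, φ (P^[m] (x, y))) →
          ∀ m₁ m₂ : ℕ, m₀ ≤ m₁ → m₁ ≤ m₂ →
            |∫ x, (⨆ y : Iv, φ (P^[m₂] (x, y))) ∂μ -
              ∫ x, (⨆ y : Iv, φ (P^[m₁] (x, y))) ∂μ| ≤ ε := by
  obtain ⟨M, hM⟩ : ∃ M, ∀ p : Sq, |φ p| ≤ M := by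
    obtain ⟨M, hM⟩ := (isCompact_range hφ).isBounded.exists_norm_le
    exact ⟨M, fun p => hM _ (mem_range_self p)⟩
  obtain ⟨m₀, hm₀, hosc⟩ := exists_oscillation_le_of_contractingFibers (C := C) hρ₀.le hρ₁
    (CompactSpace.uniformContinuous_of_continuous hφ) hε
  refine ⟨m₀, hm₀, fun f _ P hf _ _ hP hcontr μ _ hinv hmeas m₁ m₂ hm₁ hm₁₂ => ?_⟩
  obtain ⟨k, rfl⟩ := Nat.exists_eq_add_of_le hm₁₂
  have hskew : Semiconj Prod.fst P f := fun p => by rw [hP p]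
  exact abs_integral_fiberSup_iterate_add_sub_le ⟨hf, hinv⟩ hskew hM hmeas
    (hosc P hcontr m₁ hm₁) k

/-- Given `C > 0`, `ρ ∈ (0,1)`, a continuous `φ : I×I → ℝ` and `ε > 0`,
there is `m₀ ≥ 1`, depending only on `ε, C, ρ, φ`, such that for every skew product `P` over
`f` with `(C,ρ)`-contracting fibers, every `f`-invariant Borel probability measure `μ̄`, and
all `m₂ ≥ m₁ ≥ m₀`, the integrals `∫ (φ∘P^{m_i})⁺ dμ̄` differ by at most `ε`. -/
theorem uniform_cauchy_sup_integrals
    (C ρ : ℝ) (hC : 0 < C) (hρ₀ : 0 < ρ) (hρ₁ : ρ < 1)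
    (φ : Sq → ℝ) (hφ : Continuous φ) (ε : ℝ) (hε : 0 < ε) :
    ∃ m₀ : ℕ, 1 ≤ m₀ ∧
      ∀ (f : Iv → Iv) (g : Sq → Iv) (P : Sq → Sq),
        Measurable f → Measurable g → Measurable P →
        (∀ p : Sq, P p = (f p.1, g p)) →
        (∀ (x y₁ y₂ : Iv) (m : ℕ), 1 ≤ m →
          dist (P^[m] (x, y₁)) (P^[m] (x, y₂)) ≤ C * ρ ^ m) →
        ∀ μ : Measure Iv, IsProbabilityMeasure μ → Measure.map f μ = μ →
          (∀ m : ℕ, Measurable fun x : Iv => ⨆ y : Iv, φ (P^[m] (x, y))) →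
          ∀ m₁ m₂ : ℕ, m₀ ≤ m₁ → m₁ ≤ m₂ →
            |∫ x, (⨆ y : Iv, φ (P^[m₂] (x, y))) ∂μ -
              ∫ x, (⨆ y : Iv, φ (P^[m₁] (x, y))) ∂μ| ≤ ε :=
  uniform_cauchy_sup_integrals_general C ρ hρ₀ hρ₁ φ hφ ε hε
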